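/- In the joint-venture game where each player chooses Work (W) or Shirk (S) with payoffs u(S,S)=(0,0), u(W,W)=(4,4), u(W,S)=(1,5), u(S,W)=(5,1), the profile (W,W) played with probability one is an interdependent-choice equilibrium but is not a Nash equilibrium. -/

import Mathlib

open Finset

/-- Joint-venture payoffs: `true` = Work, `false` = Shirk. -/
def jvU1 : Bool → Bool → ℝ
  | true, true => 4
  | true, false => 1
  | false, true => 5
  | false, false => 0

def jvU2 (a1 a2 : Bool) : ℝ := jvU1 a2 a1

/-- `α` is an interdependent-choice equilibrium (threats = full action set). -/
noncomputable def jvICE (α : Bool × Bool → ℝ) : Prop :=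
  (∀ a, 0 ≤ α a) ∧ (∑ a, α a = 1) ∧
  ∃ θ : Bool × Bool → ℝ, (∀ a, 0 ≤ θ a ∧ θ a ≤ 1) ∧
    (∀ a1 a1' : Bool, 0 ≤ ∑ a2, α (a1, a2) *
      (jvU1 a1 a2 - (1 - θ (a1, a2)) * jvU1 a1' a2
        - θ (a1, a2) * min (jvU1 a1' true) (jvU1 a1' false))) ∧
    (∀ a2 a2' : Bool, 0 ≤ ∑ a1, α (a1, a2) *
      (jvU2 a1 a2 - θ (a1, a2) * jvU2 a1 a2'
        - (1 - θ (a1, a2)) * min (jvU2 true a2') (jvU2 false a2')))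

/-! With all weight on `(W, W)` and `θ = 1/2`, every deviation is worth at most
`(5 + 0) / 2 = (4 + 1) / 2 = 5/2 < 4` under the threat, while against a worker who does not
react, shirking earns `5 > 4`. -/

theorem jvICE_pure {a1 a2 : Bool} (θ : ℝ) (hθ : θ ∈ Set.Icc (0 : ℝ) 1)
    (h1 : ∀ a1', (1 - θ) * jvU1 a1' a2 + θ * min (jvU1 a1' true) (jvU1 a1' false)
      ≤ jvU1 a1 a2)
    (h2 : ∀ a2', θ * jvU2 a1 a2' + (1 - θ) * min (jvU2 true a2') (jvU2 false a2')
      ≤ jvU2 a1 a2) :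
    jvICE (fun b => if b = (a1, a2) then 1 else 0) := by
  refine ⟨fun b => by dsimp only; split_ifs <;> norm_num, by simp, fun _ => θ, fun _ => hθ,
    ?_, ?_⟩
  · intro b1 a1'
    by_cases hb : b1 = a1
    · subst hb
      simp only [Prod.mk.injEq, true_and, ite_mul, one_mul, zero_mul, sum_ite_eq', mem_univ,
        if_true]
      linarith [h1 a1']
    · simp [hb]
  · intro b2 a2'
    by_cases hb : b2 = a2
    · subst hb
      simp only [Prod.mk.injEq, and_true, ite_mul, one_mul, zero_mul, sum_ite_eq', mem_univ,
        if_true]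
      linarith [h2 a2']
    · simp [hb]

theorem jvICE_work_work : jvICE (fun a => if a = (true, true) then 1 else 0) := by
  refine jvICE_pure (1 / 2) ⟨by norm_num, by norm_num⟩ ?_ ?_ <;>
    rintro (_ | _) <;> norm_num [jvU1, jvU2]

theorem jvU1_work_lt_shirk : jvU1 true true < jvU1 false true := by
  norm_num [jvU1]

/-- (W,W) with probability one is an ICE of the joint-venture game, but (W,W) is not
a Nash equilibrium of the simultaneous-move game. -/
theorem stmt5 :
    jvICE (fun a => if a = (true, true) then 1 else 0) ∧
    ¬ ((∀ a1' : Bool, jvU1 a1' true ≤ jvU1 true true) ∧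
       (∀ a2' : Bool, jvU2 true a2' ≤ jvU2 true true)) :=
  ⟨jvICE_work_work, fun ⟨hnash1, _⟩ => (hnash1 false).not_gt jvU1_work_lt_shirk⟩
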